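/- Let V be a finite-dimensional real inner product space and W ⊆ V a subspace of dimension n ≥ 4. For β ∈ V^* and v ∈ V define the endomorphism [β, v] := v ⊗ β − β^♯ ⊗ v^♭ + β(v)·I of V, where β^♯ ∈ V is the inner-product dual of β, v^♭ = ⟨v,·⟩, and v ⊗ β is the endomorphism x ↦ β(x)v. Suppose α : W × W → V^* is an alternating bilinear map satisfying [α(w₂, w₃), w₁] − [α(w₁, w₃), w₂] + [α(w₁, w₂), w₃] = 0 (as an endomorphism of V) for all w₁, w₂, w₃ ∈ W. Then α = 0. (In cohomological terms: H^{2,2}(so(ñ+1,1), W) = Z^{2,2}(so(ñ+1,1), W) = 0 for n ≥ 4.) -/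

import Mathlib

open RealInnerProductSpace Module

/-- The inner-product dual `β^♯ ∈ V` of a linear functional `β : V → ℝ`. -/
noncomputable def sharpDual {V : Type*} [NormedAddCommGroup V] [InnerProductSpace ℝ V]
    [FiniteDimensional ℝ V] (β : V →ₗ[ℝ] ℝ) : V :=
  (InnerProductSpace.toDual ℝ V).symm (LinearMap.toContinuousLinearMap β)

/-- The level-(1,−1) bracket of the graded Lie algebra `𝔰𝔬(ñ+1,1) = V + 𝔠𝔬(V) + V^*`:
`[β, v] = v ⊗ β − β^♯ ⊗ v^♭ + β(v)·I`. -/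
noncomputable def lev1Bracket {V : Type*} [NormedAddCommGroup V] [InnerProductSpace ℝ V]
    [FiniteDimensional ℝ V] (β : V →ₗ[ℝ] ℝ) (v : V) : V →ₗ[ℝ] V :=
  β.smulRight v - ((innerSL ℝ v : V →L[ℝ] ℝ) : V →ₗ[ℝ] ℝ).smulRight (sharpDual β)
    + β v • LinearMap.id

/-!
Pair the cocycle identity with `x, y` and evaluate it on an orthonormal basis `e` of `W`.
With four distinct indices, `x = e i`, `y = e l` kills `α(e j, e k)(e l)`, and `y ∈ Wᗮ` kills
`α(e j, e k)` on `Wᗮ`. The diagonal values `s i = α(e i, e k)(e i)` satisfy `s i + s j = 0`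
for distinct `i, j ≠ k`; three such indices exist because `n ≥ 4`, so `s = 0`. Hence every
`α(e j, e k)` vanishes on `W ⊕ Wᗮ = V`.
-/

lemma exists_ne_ne_ne_of_three_lt_card {ι : Type*} [Fintype ι] [DecidableEq ι]
    (h : 3 < Fintype.card ι) (a b c : ι) : ∃ i, i ≠ a ∧ i ≠ b ∧ i ≠ c := by
  obtain ⟨i, -, hi⟩ := Finset.exists_mem_notMem_of_card_lt_card
    (s := {a, b, c}) (t := Finset.univ) (Finset.card_le_three.trans_lt h)
  simp only [Finset.mem_insert, Finset.mem_singleton, not_or] at hi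
  exact ⟨i, hi⟩

lemma LinearMap.eq_zero_of_le_ker_of_orthogonal_le_ker {V M : Type*} [NormedAddCommGroup V]
    [InnerProductSpace ℝ V] [AddCommGroup M] [Module ℝ M] (K : Submodule ℝ V)
    [K.HasOrthogonalProjection] (β : V →ₗ[ℝ] M) (hK : K ≤ ker β) (hKo : Kᗮ ≤ ker β) :
    β = 0 :=
  ker_eq_top.mp <| top_le_iff.mp <| K.sup_orthogonal_of_hasOrthogonalProjection ▸ sup_le hK hKo

lemma AlternatingMap.apply_vecCons_swap {R M N : Type*} [CommRing R] [AddCommGroup M]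
    [Module R M] [AddCommGroup N] [Module R N] (α : M [⋀^Fin 2]→ₗ[R] N) (a b : M) :
    α ![a, b] = -α ![b, a] := by
  have hswap : ![b, a] ∘ Equiv.swap (0 : Fin 2) 1 = ![a, b] := by
    funext i; fin_cases i <;> rfl
  rw [← α.map_swap ![b, a] (i := 0) (j := 1) (by decide), hswap]

lemma OrthonormalBasis.inner_coe_submodule_eq_ite {V ι : Type*} [NormedAddCommGroup V]
    [InnerProductSpace ℝ V] {W : Submodule ℝ V} [Fintype ι] [DecidableEq ι]
    (e : OrthonormalBasis ι ℝ W) (i j : ι) :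
    ⟪((e i : W) : V), ((e j : W) : V)⟫ = if i = j then 1 else 0 := by
  rw [← Submodule.coe_inner, e.inner_eq_ite]

section Cocycle

variable {V : Type*} [NormedAddCommGroup V] [InnerProductSpace ℝ V] [FiniteDimensional ℝ V]

lemma inner_sharpDual (β : V →ₗ[ℝ] ℝ) (y : V) : ⟪sharpDual β, y⟫ = β y := by
  simp [sharpDual, InnerProductSpace.toDual_symm_apply]

lemma inner_lev1Bracket_apply (β : V →ₗ[ℝ] ℝ) (v x y : V) :
    ⟪lev1Bracket β v x, y⟫ = β x * ⟪v, y⟫ - ⟪v, x⟫ * β y + β v * ⟪x, y⟫ := by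
  simp only [lev1Bracket, LinearMap.add_apply, LinearMap.sub_apply, LinearMap.smul_apply,
    LinearMap.smulRight_apply, LinearMap.id_apply, ContinuousLinearMap.coe_coe, innerSL_apply_apply,
    inner_add_left, inner_sub_left, real_inner_smul_left, inner_sharpDual]

def IsSpencerCocycle {W : Submodule ℝ V} (α : W [⋀^Fin 2]→ₗ[ℝ] (V →ₗ[ℝ] ℝ)) : Prop :=
  ∀ w₁ w₂ w₃ : W, lev1Bracket (α ![w₂, w₃]) ↑w₁ - lev1Bracket (α ![w₁, w₃]) ↑w₂
    + lev1Bracket (α ![w₁, w₂]) ↑w₃ = 0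

variable {W : Submodule ℝ V} {α : W [⋀^Fin 2]→ₗ[ℝ] (V →ₗ[ℝ] ℝ)}

namespace IsSpencerCocycle

lemma inner_eq_zero (hα : IsSpencerCocycle α) (w₁ w₂ w₃ : W) (x y : V) :
    α ![w₂, w₃] x * ⟪(w₁ : V), y⟫ - ⟪(w₁ : V), x⟫ * α ![w₂, w₃] y
      - (α ![w₁, w₃] x * ⟪(w₂ : V), y⟫ - ⟪(w₂ : V), x⟫ * α ![w₁, w₃] y)
      + (α ![w₁, w₂] x * ⟪(w₃ : V), y⟫ - ⟪(w₃ : V), x⟫ * α ![w₁, w₂] y)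
      + (α ![w₂, w₃] w₁ - α ![w₁, w₃] w₂ + α ![w₁, w₂] w₃) * ⟪x, y⟫ = 0 := by
  have h := congrArg (fun f : V →ₗ[ℝ] V => ⟪f x, y⟫) (hα w₁ w₂ w₃)
  simp only [LinearMap.add_apply, LinearMap.sub_apply, LinearMap.zero_apply, inner_add_left,
    inner_sub_left, inner_zero_left, inner_lev1Bracket_apply] at h
  linarith

variable (hα : IsSpencerCocycle α) {ι : Type*} [Fintype ι] [DecidableEq ι]
  (e : OrthonormalBasis ι ℝ W) {i j k l : ι}
include hα

lemma apply_basis_eq_zero_of_pairwise_ne (hij : i ≠ j) (hik : i ≠ k) (hil : i ≠ l)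
    (hjl : j ≠ l) (hkl : k ≠ l) : α ![e j, e k] (e l : V) = 0 := by
  have h := hα.inner_eq_zero (e i) (e j) (e k) (e i) (e l)
  simp only [e.inner_coe_submodule_eq_ite, ↓reduceIte, hil, hjl, hkl, hij.symm, hik.symm] at h
  linarith

lemma apply_basis_left_add_apply_basis_left (hij : i ≠ j) (hik : i ≠ k) (hjk : j ≠ k) :
    α ![e j, e k] (e j : V) + α ![e i, e k] (e i : V) = 0 := by
  have h := hα.inner_eq_zero (e i) (e j) (e k) (e j) (e i)
  simp only [e.inner_coe_submodule_eq_ite, ↓reduceIte, hij, hij.symm, hik.symm, hjk.symm] at h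
  linarith

lemma apply_basis_left_eq_zero (hij : i ≠ j) (hik : i ≠ k) (hjk : j ≠ k) (hli : l ≠ i)
    (hlj : l ≠ j) (hlk : l ≠ k) : α ![e j, e k] (e j : V) = 0 := by
  have hij' := hα.apply_basis_left_add_apply_basis_left e hij hik hjk
  have hlj' := hα.apply_basis_left_add_apply_basis_left e hlj hlk hjk
  have hil' := hα.apply_basis_left_add_apply_basis_left e hli.symm hik hlk
  linarith

lemma apply_orthogonal_eq_zero (hij : i ≠ j) (hik : i ≠ k) {y : V}
    (hy : y ∈ Wᗮ) : α ![e j, e k] y = 0 := by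
  have hey (m : ι) : ⟪((e m : W) : V), y⟫ = 0 := Submodule.inner_right_of_mem_orthogonal (e m).2 hy
  have h := hα.inner_eq_zero (e i) (e j) (e k) (e i) y
  simp only [e.inner_coe_submodule_eq_ite, hey, hij.symm, hik.symm, ↓reduceIte] at h
  linarith

lemma apply_basis_eq_zero (hι : 3 < Fintype.card ι) (hjk : j ≠ k) (l : ι) :
    α ![e j, e k] (e l : V) = 0 := by
  obtain ⟨i, hij, hik, hil⟩ := exists_ne_ne_ne_of_three_lt_card hι j k l
  obtain ⟨m, hmi, hmj, hmk⟩ := exists_ne_ne_ne_of_three_lt_card hι i j k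
  rcases eq_or_ne l j with rfl | hlj
  · exact hα.apply_basis_left_eq_zero e hij hik hjk hmi hmj hmk
  rcases eq_or_ne l k with rfl | hlk
  · rw [α.apply_vecCons_swap, LinearMap.neg_apply,
      hα.apply_basis_left_eq_zero e hik hij hjk.symm hmi hmk hmj, neg_zero]
  exact hα.apply_basis_eq_zero_of_pairwise_ne e hij hik hil hlj.symm hlk.symm

lemma apply_basis_pair_eq_zero (hι : 3 < Fintype.card ι) (hjk : j ≠ k) : α ![e j, e k] = 0 := by
  obtain ⟨i, hij, hik, -⟩ := exists_ne_ne_ne_of_three_lt_card hι j k k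
  refine LinearMap.eq_zero_of_le_ker_of_orthogonal_le_ker W _ ?_
    (fun y hy => hα.apply_orthogonal_eq_zero e hij hik hy)
  have hW : α ![e j, e k] ∘ₗ W.subtype = 0 :=
    e.toBasis.ext fun l => by simpa using hα.apply_basis_eq_zero e hι hjk l
  exact fun x hx => LinearMap.congr_fun hW ⟨x, hx⟩

end IsSpencerCocycle

end Cocycle

/-- `H^{2,2}(𝔰𝔬(ñ+1,1), W) = Z^{2,2}(𝔰𝔬(ñ+1,1), W) = 0` for `dim W = n ≥ 4`: every
alternating bilinear `α : W × W → V^*` with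
`[α(w₂,w₃), w₁] − [α(w₁,w₃), w₂] + [α(w₁,w₂), w₃] = 0` vanishes. -/
theorem conformal_spencer22_cocycle_eq_zero
    (V : Type*) [NormedAddCommGroup V] [InnerProductSpace ℝ V] [FiniteDimensional ℝ V]
    (W : Submodule ℝ V) (hn : 4 ≤ finrank ℝ W)
    (α : W [⋀^Fin 2]→ₗ[ℝ] (V →ₗ[ℝ] ℝ))
    (hcocycle : ∀ w₁ w₂ w₃ : W,
      lev1Bracket (α ![w₂, w₃]) ↑w₁ - lev1Bracket (α ![w₁, w₃]) ↑w₂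
        + lev1Bracket (α ![w₁, w₂]) ↑w₃ = 0) :
    α = 0 := by
  let e := stdOrthonormalBasis ℝ W
  have hcard : 3 < Fintype.card (Fin (finrank ℝ W)) := by simp only [Fintype.card_fin]; omega
  refine e.toBasis.ext_alternating fun v hv => ?_
  have hpair : (fun i => e.toBasis (v i)) = ![e (v 0), e (v 1)] := by
    funext i; fin_cases i <;> simp
  rw [hpair, IsSpencerCocycle.apply_basis_pair_eq_zero hcocycle e hcard
    (hv.ne (by decide : (0 : Fin 2) ≠ 1)), AlternatingMap.zero_apply]
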